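/- Let G_1 and G_2 be finite simple graphs with V(G_1) ∩ V(G_2) = {v}. If minrk_q(G_1 − v) = minrk_q(G_1) − 1, then minrk_q(G_1 ∪ G_2) = minrk_q(G_1) − 1 + minrk_q(G_2 − v) + (minrk_q(G_2) − minrk_q(G_2 − v)). -/

import Mathlib

open scoped Classical

/-- A matrix `M` fits the graph `G` if its diagonal entries are nonzero and its
entries at distinct non-adjacent pairs of vertices are zero. -/
def Fits {V F : Type} [Fintype V] [Field F]
    (G : SimpleGraph V) (M : Matrix V V F) : Prop :=
  (∀ u, M u u ≠ 0) ∧ ∀ u v, u ≠ v → ¬ G.Adj u v → M u v = 0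

/-- The min-rank of `G` over the field `F`: the minimum rank of a matrix fitting `G`. -/
noncomputable def minrk (F : Type) [Field F] {V : Type} [Fintype V]
    (G : SimpleGraph V) : ℕ :=
  sInf {r : ℕ | ∃ M : Matrix V V F, Fits G M ∧ M.rank = r}

/-!
Put `W₁ = S1 \ {v}` and `W₂ = S2 \ {v}`. As `minrk G[W₂] ≤ minrk G[S2]`, the claim says
`minrk G = minrk G[W₁] + minrk G[S2]`. The block-diagonal sum of optimal fitting matrices of
`G[W₁]` and `G[W₁ᶜ]` fits `G`, and `W₁ᶜ ⊆ S2`; this gives `≤`.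

Conversely let `M` fit `G` and let `U₁`, `U₂` be the spans of its columns indexed by `W₁`, `W₂`.
There are no edges between `W₁` and `W₂`, so the vectors of `U₂` vanish on `W₁` and vice versa;
hence the principal submatrix on `W₁` gives `minrk G[W₁] + dim U₂ ≤ dim (U₁ + U₂)`, and
symmetrically. If the column of `v` lies outside `U₁ + U₂`, then `rank M = dim (U₁ + U₂) + 1`
while `minrk G[S2] ≤ dim U₂ + 1`. Otherwise it splits as `u₁ + u₂` with `uᵢ ∈ Uᵢ`, one of the
`uᵢ v` is nonzero, and replacing the column of `v` by that `uᵢ` still gives a matrix fitting `G`,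
so `minrk G[Sᵢ] ≤ dim Uᵢ`. For `i = 2` this is `≥`; for `i = 1` one concludes with
`minrk G[W₁] = minrk G[S1] - 1` and `minrk G[S2] ≤ minrk G[W₂] + 1`.
-/

open Module Submodule Matrix

section LinearAlgebra

variable {K : Type*} [Field K]

theorem Submodule.finrank_map_add_finrank_le_finrank_sup {E W : Type*} [AddCommGroup E]
    [Module K E] [FiniteDimensional K E] [AddCommGroup W] [Module K W] [FiniteDimensional K W]
    (f : E →ₗ[K] W) (U Z : Submodule K E) (hZ : Z ≤ LinearMap.ker f) :
    finrank K (U.map f) + finrank K Z ≤ finrank K ↥(U ⊔ Z) := by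
  set P := U ⊔ Z
  set g := f.comp P.subtype
  have hrange : LinearMap.range g = P.map f := by
    rw [LinearMap.range_comp, range_subtype]
  have hker : Z ≤ (LinearMap.ker g).map P.subtype := by
    rw [LinearMap.ker_comp, map_comap_subtype]
    exact le_inf le_sup_right hZ
  calc finrank K (U.map f) + finrank K Z
      ≤ finrank K (P.map f) + finrank K ((LinearMap.ker g).map P.subtype) := by
        gcongr
        · exact finrank_mono (map_mono le_sup_left)
        · exact finrank_mono hker
    _ ≤ finrank K (LinearMap.range g) + finrank K (LinearMap.ker g) := by
        rw [hrange]
        exact Nat.add_le_add_left (finrank_map_le _ _) _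
    _ = finrank K P := LinearMap.finrank_range_add_finrank_ker g

namespace Matrix

variable {m m' n n' : Type*} [Fintype m] [Fintype m'] [Fintype n] [Fintype n']

theorem rank_le_finrank_of_col_mem {A : Matrix m n K} {U : Submodule K (m → K)}
    (h : ∀ j, A.col j ∈ U) : A.rank ≤ finrank K U := by
  rw [rank_eq_finrank_span_cols]
  exact finrank_mono (span_le.mpr (Set.range_subset_iff.mpr h))

theorem rank_fromCols_le (A : Matrix m n K) (B : Matrix m n' K) :
    (fromCols A B).rank ≤ A.rank + B.rank := by
  have hcols : Set.range (fromCols A B).col = Set.range A.col ∪ Set.range B.col := by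
    ext x
    simp only [Set.mem_range, Set.mem_union, Sum.exists]
    exact Iff.rfl
  rw [rank_eq_finrank_span_cols, rank_eq_finrank_span_cols, rank_eq_finrank_span_cols, hcols,
    span_union]
  exact finrank_add_le_finrank_add_finrank _ _

theorem rank_fromRows_le (A : Matrix m n K) (B : Matrix m' n K) :
    (fromRows A B).rank ≤ A.rank + B.rank := by
  simpa only [← rank_transpose (fromRows A B), transpose_fromRows, rank_transpose] using
    rank_fromCols_le Aᵀ Bᵀ

theorem rank_fromBlocks_zero_zero_le (A : Matrix m n K) (B : Matrix m' n' K) :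
    (fromBlocks A 0 0 B).rank ≤ A.rank + B.rank := by
  rw [← fromCols_fromRows_eq_fromBlocks]
  refine (rank_fromCols_le _ _).trans (add_le_add ?_ ?_)
  · simpa using rank_fromRows_le A (0 : Matrix m' n K)
  · simpa using rank_fromRows_le (0 : Matrix m n' K) B

end Matrix

end LinearAlgebra

section Minrk

variable {F : Type} [Field F] {V W : Type}

theorem fits_one [Fintype V] (G : SimpleGraph V) : Fits G (1 : Matrix V V F) :=
  ⟨fun _ => by simp, fun _ _ h _ => one_apply_ne h⟩

theorem minrk_le_rank [Fintype V] {G : SimpleGraph V} {M : Matrix V V F} (hM : Fits G M) :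
    minrk F G ≤ M.rank :=
  Nat.sInf_le ⟨M, hM, rfl⟩

theorem exists_fits_rank_eq_minrk [Fintype V] (G : SimpleGraph V) :
    ∃ M : Matrix V V F, Fits G M ∧ M.rank = minrk F G :=
  Nat.sInf_mem (⟨_, 1, fits_one G, rfl⟩ :
    {r : ℕ | ∃ M : Matrix V V F, Fits G M ∧ M.rank = r}.Nonempty)

theorem minrk_le_card [Fintype V] (G : SimpleGraph V) : minrk F G ≤ Fintype.card V :=
  (minrk_le_rank (fits_one G)).trans_eq rank_one

theorem one_le_minrk [Fintype V] [Nonempty V] (G : SimpleGraph V) : 1 ≤ minrk F G := by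
  obtain ⟨M, hM, hr⟩ := exists_fits_rank_eq_minrk (F := F) G
  obtain ⟨u⟩ := ‹Nonempty V›
  rw [← hr, rank_eq_finrank_span_cols, one_le_finrank_iff, Submodule.ne_bot_iff]
  exact ⟨M.col u, subset_span ⟨u, rfl⟩, fun h => hM.1 u (congrFun h u)⟩

theorem Fits.comap [Fintype V] [Fintype W] {G : SimpleGraph V} {M : Matrix V V F}
    (hM : Fits G M) {f : W → V} (hf : Function.Injective f) :
    Fits (G.comap f) (M.submatrix f f) :=
  ⟨fun u => hM.1 (f u), fun _ _ hab hnadj => hM.2 _ _ (hf.ne hab) hnadj⟩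

theorem Fits.updateCol [Fintype V] {G : SimpleGraph V} {M : Matrix V V F} (hM : Fits G M)
    {v : V} {x : V → F} (hxv : x v ≠ 0) (hx : ∀ a, a ≠ v → ¬G.Adj a v → x a = 0) :
    Fits G (M.updateCol v x) := by
  refine ⟨fun u => ?_, fun a b hab hnadj => ?_⟩
  · rw [updateCol_apply]
    split_ifs with hu
    · exact hu ▸ hxv
    · exact hM.1 u
  · rw [updateCol_apply]
    split_ifs with hb
    · exact hx a (hb ▸ hab) (hb ▸ hnadj)
    · exact hM.2 a b hab hnadj

theorem minrk_comap_le [Fintype V] [Fintype W] (G : SimpleGraph V) {f : W → V}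
    (hf : Function.Injective f) : minrk F (G.comap f) ≤ minrk F G := by
  obtain ⟨M, hM, hr⟩ := exists_fits_rank_eq_minrk (F := F) G
  exact (minrk_le_rank (hM.comap hf)).trans (hr ▸ rank_submatrix_le M f f)

theorem minrk_induce_le_finrank_map [Fintype V] {G : SimpleGraph V} {M : Matrix V V F}
    (hM : Fits G M) {s : Set V} [Fintype s] {U : Submodule F (V → F)}
    (hU : ∀ b ∈ s, M.col b ∈ U) :
    minrk F (G.induce s) ≤ finrank F (U.map (LinearMap.funLeft F F ((↑) : s → V))) :=
  (minrk_le_rank (hM.comap Subtype.val_injective)).trans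
    (rank_le_finrank_of_col_mem fun j => ⟨M.col j, hU j j.2, rfl⟩)

theorem minrk_induce_le_finrank_span_diff_add_one [Fintype V] {G : SimpleGraph V}
    {M : Matrix V V F} (hM : Fits G M) (s : Set V) [Fintype s] (v : V) :
    minrk F (G.induce s) ≤ finrank F (span F (M.col '' (s \ {v}))) + 1 := by
  refine (minrk_induce_le_finrank_map hM
    (U := span F (M.col '' (s \ {v})) ⊔ span F {M.col v}) fun b hb => ?_).trans ?_
  · by_cases hbv : b = v
    · subst hbv
      exact mem_sup_right (mem_span_singleton_self _)
    · exact mem_sup_left (subset_span ⟨b, ⟨hb, hbv⟩, rfl⟩)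
  · refine (finrank_map_le _ _).trans ((finrank_add_le_finrank_add_finrank _ _).trans ?_)
    exact Nat.add_le_add_left ((finrank_span_le_card ({M.col v} : Set (V → F))).trans
      (by simp)) _

theorem minrk_le_add_compl [Fintype V] (G : SimpleGraph V) (s : Set V) [Fintype s]
    [Fintype ↥sᶜ] : minrk F G ≤ minrk F (G.induce s) + minrk F (G.induce sᶜ) := by
  obtain ⟨A, hA, hAr⟩ := exists_fits_rank_eq_minrk (F := F) (G.induce s)
  obtain ⟨B, hB, hBr⟩ := exists_fits_rank_eq_minrk (F := F) (G.induce sᶜ)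
  set e := (Equiv.Set.sumCompl s).symm
  have hfits : Fits G ((fromBlocks A 0 0 B).submatrix e e) := by
    refine ⟨fun u => ?_, fun a b hab hnadj => ?_⟩
    · by_cases hu : u ∈ s
      · simpa [e, Equiv.Set.sumCompl_symm_apply_of_mem hu] using hA.1 ⟨u, hu⟩
      · simpa [e, Equiv.Set.sumCompl_symm_apply_of_notMem hu] using hB.1 ⟨u, hu⟩
    · by_cases ha : a ∈ s <;> by_cases hb : b ∈ s <;>
        simp only [e, submatrix_apply, Equiv.Set.sumCompl_symm_apply_of_mem,
          Equiv.Set.sumCompl_symm_apply_of_notMem, ha, hb, not_false_eq_true, fromBlocks_apply₁₁,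
          fromBlocks_apply₁₂, fromBlocks_apply₂₁, fromBlocks_apply₂₂, Matrix.zero_apply]
      · exact hA.2 ⟨a, ha⟩ ⟨b, hb⟩ (by simpa using hab) hnadj
      · exact hB.2 ⟨a, ha⟩ ⟨b, hb⟩ (by simpa using hab) hnadj
  calc minrk F G ≤ ((fromBlocks A 0 0 B).submatrix e e).rank := minrk_le_rank hfits
    _ = (fromBlocks A 0 0 B).rank := rank_submatrix _ _ _
    _ ≤ minrk F (G.induce s) + minrk F (G.induce sᶜ) :=
      hAr ▸ hBr ▸ rank_fromBlocks_zero_zero_le A B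

theorem minrk_induce_le_of_subset (G : SimpleGraph V) {s t : Set V} [Fintype s] [Fintype t]
    (h : s ⊆ t) : minrk F (G.induce s) ≤ minrk F (G.induce t) :=
  minrk_comap_le (G.induce t) (Set.inclusion_injective h)

theorem minrk_induce_le_diff_singleton_add_one (G : SimpleGraph V) (t : Set V) (v : V)
    [Fintype t] [Fintype ↥(t \ {v})] :
    minrk F (G.induce t) ≤ minrk F (G.induce (t \ {v})) + 1 := by
  set s : Set t := {a | (a : V) ≠ v}
  -- `G[t]` restricted to `s` is `G[t \ {v}]` up to relabelling, and `sᶜ` has at most one point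
  have hs : minrk F ((G.induce t).induce s) ≤ minrk F (G.induce (t \ {v})) :=
    minrk_comap_le (G.induce (t \ {v})) (f := fun a : s => ⟨a, a.1.2, a.2⟩)
      fun a b h => Subtype.ext (Subtype.ext (congrArg (fun x : ↥(t \ {v}) => (x : V)) h))
  have hsc : minrk F ((G.induce t).induce sᶜ) ≤ 1 := by
    refine (minrk_le_card _).trans (Fintype.card_le_one_iff.mpr fun a b => ?_)
    have ha : ((a : t) : V) = v := not_not.mp a.2
    have hb : ((b : t) : V) = v := not_not.mp b.2
    exact Subtype.ext (Subtype.ext (ha.trans hb.symm))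
  have := minrk_le_add_compl (F := F) (G.induce t) s
  omega

end Minrk

structure IsVertexSum {V : Type} (G : SimpleGraph V) (s₁ s₂ : Set V) (v : V) : Prop where
  inter_eq : s₁ ∩ s₂ = {v}
  union_eq : s₁ ∪ s₂ = Set.univ
  adj_mem : ∀ a b, G.Adj a b → (a ∈ s₁ ∧ b ∈ s₁) ∨ (a ∈ s₂ ∧ b ∈ s₂)

namespace IsVertexSum

variable {V : Type} {G : SimpleGraph V} {s₁ s₂ : Set V} {v : V}

theorem symm (hG : IsVertexSum G s₁ s₂ v) : IsVertexSum G s₂ s₁ v :=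
  ⟨Set.inter_comm s₂ s₁ ▸ hG.inter_eq, Set.union_comm s₂ s₁ ▸ hG.union_eq,
    fun a b h => (hG.adj_mem a b h).symm⟩

theorem mem_left (hG : IsVertexSum G s₁ s₂ v) : v ∈ s₁ :=
  (hG.inter_eq.symm ▸ Set.mem_singleton v : v ∈ s₁ ∩ s₂).1

theorem notMem_right (hG : IsVertexSum G s₁ s₂ v) {a : V} (ha : a ∈ s₁ \ {v}) : a ∉ s₂ := by
  intro h
  have : a ∈ s₁ ∩ s₂ := ⟨ha.1, h⟩
  rw [hG.inter_eq] at this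
  exact ha.2 this

theorem mem_diff_or_mem_diff (hG : IsVertexSum G s₁ s₂ v) {a : V} (ha : a ≠ v) :
    a ∈ s₁ \ {v} ∨ a ∈ s₂ \ {v} := by
  have : a ∈ s₁ ∪ s₂ := hG.union_eq ▸ Set.mem_univ a
  exact this.imp (⟨·, ha⟩) (⟨·, ha⟩)

theorem compl_diff_subset (hG : IsVertexSum G s₁ s₂ v) : (s₁ \ {v})ᶜ ⊆ s₂ := fun a ha => by
  by_cases hav : a = v
  · exact hav ▸ hG.symm.mem_left
  · exact ((hG.mem_diff_or_mem_diff hav).resolve_left ha).1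

variable {F : Type} [Field F] {M : Matrix V V F}

local notation "U₁" => span F (M.col '' (s₁ \ (singleton v : Set V)))
local notation "U₂" => span F (M.col '' (s₂ \ (singleton v : Set V)))

theorem span_range_col_eq (hG : IsVertexSum G s₁ s₂ v) :
    span F (Set.range M.col) = U₁ ⊔ U₂ ⊔ span F {M.col v} := by
  have hcover : (s₁ \ {v}) ∪ (s₂ \ {v}) ∪ {v} = Set.univ :=
    Set.eq_univ_of_forall fun a => by
      by_cases hav : a = v
      · exact Or.inr hav
      · exact Or.inl (hG.mem_diff_or_mem_diff hav)
  rw [← Set.image_univ, ← hcover, Set.image_union, Set.image_union, Set.image_singleton,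
    span_union, span_union]

variable [Fintype V]

theorem apply_eq_zero (hG : IsVertexSum G s₁ s₂ v) (hM : Fits G M) {a b : V}
    (ha : a ∈ s₁ \ {v}) (hb : b ∈ s₂ \ {v}) : M a b = 0 :=
  hM.2 a b (fun h => hG.notMem_right ha (h ▸ hb.1)) fun hadj =>
    (hG.adj_mem a b hadj).elim (fun h => hG.symm.notMem_right hb h.2)
      fun h => hG.notMem_right ha h.1

theorem apply_eq_zero_of_mem_span (hG : IsVertexSum G s₁ s₂ v) (hM : Fits G M) {x : V → F}
    (hx : x ∈ U₂) {a : V} (ha : a ∈ s₁ \ {v}) : x a = 0 := by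
  have : U₂ ≤ LinearMap.ker (LinearMap.proj a) :=
    span_le.mpr (by rintro _ ⟨b, hb, rfl⟩; exact hG.apply_eq_zero hM ha hb)
  exact this hx

theorem minrk_induce_le_finrank_of_add_eq (hG : IsVertexSum G s₁ s₂ v) (hM : Fits G M)
    {u₁ u₂ : V → F} (hu₁ : u₁ ∈ U₁) (hu₂ : u₂ ∈ U₂) (hsum : u₁ + u₂ = M.col v)
    (hv : u₂ v ≠ 0) : minrk F (G.induce s₂) ≤ finrank F U₂ := by
  have hfits : Fits G (M.updateCol v u₂) := hM.updateCol hv fun a hav hnadj => by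
    rcases hG.mem_diff_or_mem_diff hav with ha | ha
    · exact hG.apply_eq_zero_of_mem_span hM hu₂ ha
    · have hcol : u₁ a + u₂ a = M a v := congrFun hsum a
      rw [hG.symm.apply_eq_zero_of_mem_span hM hu₁ ha, zero_add] at hcol
      exact hcol.trans (hM.2 a v hav hnadj)
  refine (minrk_induce_le_finrank_map hfits fun b hb => ?_).trans (finrank_map_le _ _)
  by_cases hbv : b = v
  · subst hbv
    have : (M.updateCol b u₂).col b = u₂ := funext fun i => updateCol_self (M := M) (i := i)
    rwa [this]
  · have : (M.updateCol v u₂).col b = M.col b := funext fun i => updateCol_ne hbv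
    rw [this]
    exact subset_span ⟨b, ⟨hb, hbv⟩, rfl⟩

theorem minrk_induce_diff_add_finrank_le (hG : IsVertexSum G s₁ s₂ v) (hM : Fits G M) :
    minrk F (G.induce (s₁ \ {v})) + finrank F U₂ ≤ finrank F ↥(U₁ ⊔ U₂) := by
  set f := LinearMap.funLeft F F ((↑) : ↥(s₁ \ {v}) → V)
  have hker : U₂ ≤ LinearMap.ker f := fun x hx =>
    LinearMap.mem_ker.mpr (funext fun a => hG.apply_eq_zero_of_mem_span hM hx a.2)
  exact (Nat.add_le_add_right (minrk_induce_le_finrank_map hM fun b hb =>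
    subset_span (Set.mem_image_of_mem _ hb)) _).trans
    (finrank_map_add_finrank_le_finrank_sup f _ _ hker)

theorem minrk_add_minrk_le_rank (hG : IsVertexSum G s₁ s₂ v) (hM : Fits G M) :
    minrk F (G.induce (s₁ \ {v})) + minrk F (G.induce s₂) ≤ M.rank ∨
      minrk F (G.induce (s₂ \ {v})) + minrk F (G.induce s₁) ≤ M.rank := by
  have h₁ := hG.minrk_induce_diff_add_finrank_le hM
  have h₂ := hG.symm.minrk_induce_diff_add_finrank_le hM
  rw [sup_comm] at h₂
  have hrank : M.rank = finrank F ↥(U₁ ⊔ U₂ ⊔ span F {M.col v}) := by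
    rw [rank_eq_finrank_span_cols, hG.span_range_col_eq]
  by_cases hcol : M.col v ∈ U₁ ⊔ U₂
  · have hsup : finrank F ↥(U₁ ⊔ U₂) ≤ M.rank := hrank ▸ finrank_mono le_sup_left
    obtain ⟨u₁, hu₁, u₂, hu₂, hsum⟩ := mem_sup.mp hcol
    by_cases hv : u₂ v = 0
    · have hv₁ : u₁ v ≠ 0 := by
        have : u₁ v + u₂ v = M v v := congrFun hsum v
        rw [hv, add_zero] at this
        exact this ▸ hM.1 v
      have := hG.symm.minrk_induce_le_finrank_of_add_eq hM hu₂ hu₁ (add_comm u₂ u₁ ▸ hsum) hv₁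
      omega
    · have := hG.minrk_induce_le_finrank_of_add_eq hM hu₁ hu₂ hsum hv
      omega
  · have hrank' : M.rank = finrank F ↥(U₁ ⊔ U₂) + 1 := hrank ▸ finrank_sup_span_singleton hcol
    have := minrk_induce_le_finrank_span_diff_add_one hM s₂ v
    omega

end IsVertexSum

theorem minrk_union_one_common_vertex_drop_general {V F : Type} [Fintype V] [Field F]
    (G : SimpleGraph V) (S1 S2 : Set V) (v : V)
    (hcap : S1 ∩ S2 = {v}) (hcup : S1 ∪ S2 = Set.univ)
    (hedges : ∀ a b, G.Adj a b → (a ∈ S1 ∧ b ∈ S1) ∨ (a ∈ S2 ∧ b ∈ S2))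
    (hdrop : minrk F (G.induce (S1 \ {v})) = minrk F (G.induce S1) - 1) :
    minrk F G =
      minrk F (G.induce S1) - 1 + minrk F (G.induce (S2 \ {v})) +
        (minrk F (G.induce S2) - minrk F (G.induce (S2 \ {v}))) := by
  have hG : IsVertexSum G S1 S2 v := ⟨hcap, hcup, hedges⟩
  have : Nonempty S1 := ⟨⟨v, hG.mem_left⟩⟩
  have hS1 : 1 ≤ minrk F (G.induce S1) := one_le_minrk _
  have hS2 : minrk F (G.induce (S2 \ {v})) ≤ minrk F (G.induce S2) :=
    minrk_induce_le_of_subset G Set.sdiff_subset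
  have hS2' : minrk F (G.induce S2) ≤ minrk F (G.induce (S2 \ {v})) + 1 :=
    minrk_induce_le_diff_singleton_add_one G S2 v
  have hupper : minrk F G ≤ minrk F (G.induce (S1 \ {v})) + minrk F (G.induce S2) :=
    (minrk_le_add_compl G _).trans
      (Nat.add_le_add_left (minrk_induce_le_of_subset G hG.compl_diff_subset) _)
  obtain ⟨M, hM, hMr⟩ := exists_fits_rank_eq_minrk (F := F) G
  have hlower := hMr ▸ hG.minrk_add_minrk_le_rank hM
  omega

theorem minrk_union_one_common_vertex_drop {V F : Type} [Fintype V] [Field F] [Fintype F]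
    (G : SimpleGraph V) (S1 S2 : Set V) (v : V)
    (hcap : S1 ∩ S2 = {v}) (hcup : S1 ∪ S2 = Set.univ)
    (hedges : ∀ a b, G.Adj a b → (a ∈ S1 ∧ b ∈ S1) ∨ (a ∈ S2 ∧ b ∈ S2))
    (hdrop : minrk F (G.induce (S1 \ {v})) = minrk F (G.induce S1) - 1) :
    minrk F G =
      minrk F (G.induce S1) - 1 + minrk F (G.induce (S2 \ {v})) +
        (minrk F (G.induce S2) - minrk F (G.induce (S2 \ {v}))) :=
  minrk_union_one_common_vertex_drop_general G S1 S2 v hcap hcup hedges hdrop
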